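/- Let A be a real n×n matrix, B a real n×p matrix, u : ℝ → ℝᵖ continuous, M a real symmetric n×n matrix, μ ∈ ℝ with AᵀM + MA + μM negative semidefinite, a ∈ ℝⁿ, c ∈ ℝᵖ, b ∈ ℝ, z > 0, r ≥ 0, and 0 ≤ τ ≤ T. Suppose z² a aᵀ ⪯ M. Let x*, x̃ : ℝ → ℝⁿ be differentiable with x*′(t) = A x*(t) + B u(t) and x̃′(t) = A x̃(t) + B u(t) for all t, and suppose x̃(0) lies in the ellipsoid {v : (x*(0) − v)ᵀ M (x*(0) − v) ≤ r}. If for all t ∈ [τ, T] the nominal trajectory satisfies the robustly modified predicate aᵀ x*(t) + cᵀ u(t) < b − √r · e^{−μt/2} / z, then for all t ∈ [τ, T] the perturbed trajectory satisfies the original predicate aᵀ x̃(t) + cᵀ u(t) < b. -/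

import Mathlib

/-!
The error `e = xs - xp` solves `e' = A e`, and the negative semidefiniteness of
`AᵀM + MA + μM` says exactly that `t ↦ exp (μ t) · eᵀ M e` is antitone, so
`e(t)ᵀ M e(t) ≤ r exp (-μ t)` for `t ≥ 0`. Since `z² a aᵀ ⪯ M`, this bounds
`|aᵀ e(t)|` by `√r exp (-μ t / 2) / z`, which is exactly the margin by which the
nominal trajectory satisfies the tightened predicate.
-/

open Matrix

variable {ι : Type*} [Fintype ι]

theorem HasDerivAt.dotProduct_mulVec_self (M : Matrix ι ι ℝ) {e : ℝ → ι → ℝ} {e' : ι → ℝ}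
    {t : ℝ} (he : HasDerivAt e e' t) :
    HasDerivAt (fun s => e s ⬝ᵥ (M *ᵥ e s)) (e' ⬝ᵥ (M *ᵥ e t) + e t ⬝ᵥ (M *ᵥ e')) t := by
  have hcoord : ∀ i, HasDerivAt (fun s => e s i) (e' i) t := hasDerivAt_pi.mp he
  have hMe : ∀ i, HasDerivAt (fun s => ∑ j, M i j * e s j) (∑ j, M i j * e' j) t :=
    fun i => HasDerivAt.fun_sum fun j _ => (hcoord j).const_mul (M i j)
  simpa only [dotProduct, mulVec, Finset.sum_add_distrib] using
    HasDerivAt.fun_sum fun i (_ : i ∈ Finset.univ) => (hcoord i).fun_mul (hMe i)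

theorem dotProduct_vecMulVec_self_mulVec (a w : ι → ℝ) :
    w ⬝ᵥ (vecMulVec a a *ᵥ w) = (a ⬝ᵥ w) ^ 2 := by
  simp [vecMulVec_mulVec, dotProduct_comm w a, sq]

theorem dotProduct_mulVec_lyapunov (A M : Matrix ι ι ℝ) (μ : ℝ) (v : ι → ℝ) :
    (A *ᵥ v) ⬝ᵥ (M *ᵥ v) + v ⬝ᵥ (M *ᵥ (A *ᵥ v)) + μ * (v ⬝ᵥ (M *ᵥ v)) =
      v ⬝ᵥ ((Aᵀ * M + M * A + μ • M) *ᵥ v) := by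
  have htranspose : v ⬝ᵥ (Aᵀ *ᵥ (M *ᵥ v)) = (A *ᵥ v) ⬝ᵥ (M *ᵥ v) := by
    rw [dotProduct_mulVec, vecMul_transpose]
  simp only [add_mulVec, dotProduct_add, smul_mulVec, dotProduct_smul, smul_eq_mul,
    ← mulVec_mulVec, htranspose]

theorem antitone_exp_mul_dotProduct_mulVec_self {A M : Matrix ι ι ℝ} {μ : ℝ}
    (hnsd : ∀ v : ι → ℝ, v ⬝ᵥ ((Aᵀ * M + M * A + μ • M) *ᵥ v) ≤ 0) {e : ℝ → ι → ℝ}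
    (he : ∀ t, HasDerivAt e (A *ᵥ e t) t) :
    Antitone fun t => Real.exp (μ * t) * (e t ⬝ᵥ (M *ᵥ e t)) := by
  have hderiv : ∀ t, HasDerivAt (fun t => Real.exp (μ * t) * (e t ⬝ᵥ (M *ᵥ e t)))
      (Real.exp (μ * t) * (e t ⬝ᵥ ((Aᵀ * M + M * A + μ • M) *ᵥ e t))) t := by
    intro t
    have hexp : HasDerivAt (fun s => Real.exp (μ * s)) (Real.exp (μ * t) * μ) t := by
      simpa using ((hasDerivAt_id t).const_mul μ).exp
    refine (hexp.mul ((he t).dotProduct_mulVec_self M)).congr_deriv ?_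
    rw [← dotProduct_mulVec_lyapunov]
    ring
  refine antitone_of_deriv_nonpos (fun t => (hderiv t).differentiableAt) fun t => ?_
  rw [(hderiv t).deriv]
  exact mul_nonpos_of_nonneg_of_nonpos (Real.exp_pos _).le (hnsd _)

theorem mul_abs_dotProduct_le_sqrt {M : Matrix ι ι ℝ} {a w : ι → ℝ} {z : ℝ} (hz : 0 ≤ z)
    (hpsd : 0 ≤ w ⬝ᵥ ((M - z ^ 2 • vecMulVec a a) *ᵥ w)) :
    z * |a ⬝ᵥ w| ≤ √(w ⬝ᵥ (M *ᵥ w)) := by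
  rw [sub_mulVec, dotProduct_sub, smul_mulVec, dotProduct_smul, smul_eq_mul,
    dotProduct_vecMulVec_self_mulVec, sub_nonneg, ← mul_pow] at hpsd
  simpa [abs_mul, abs_of_nonneg hz] using Real.abs_le_sqrt hpsd

theorem stmt6_general {n p : ℕ} (A : Matrix (Fin n) (Fin n) ℝ) (B : Matrix (Fin n) (Fin p) ℝ)
    (u : ℝ → Fin p → ℝ)
    (M : Matrix (Fin n) (Fin n) ℝ) (μ : ℝ)
    (hnsd : ∀ v : Fin n → ℝ, v ⬝ᵥ ((Aᵀ * M + M * A + μ • M) *ᵥ v) ≤ 0)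
    (a : Fin n → ℝ) (c : Fin p → ℝ) (b : ℝ) (z : ℝ) (hz : 0 < z) (r : ℝ)
    (τ T : ℝ) (hτ : 0 ≤ τ)
    (hpsd : ∀ w : Fin n → ℝ, 0 ≤ w ⬝ᵥ ((M - z ^ 2 • vecMulVec a a) *ᵥ w))
    (xs xp : ℝ → Fin n → ℝ)
    (hxs : ∀ t : ℝ, HasDerivAt xs (A *ᵥ xs t + B *ᵥ u t) t)
    (hxp : ∀ t : ℝ, HasDerivAt xp (A *ᵥ xp t + B *ᵥ u t) t)
    (hinit : xp 0 ∈ {v : Fin n → ℝ | (xs 0 - v) ⬝ᵥ (M *ᵥ (xs 0 - v)) ≤ r})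
    (hnom : ∀ t ∈ Set.Icc τ T,
      a ⬝ᵥ xs t + c ⬝ᵥ u t < b - Real.sqrt r * Real.exp (-(μ * t) / 2) / z) :
    ∀ t ∈ Set.Icc τ T, a ⬝ᵥ xp t + c ⬝ᵥ u t < b := by
  intro t ht
  set e : ℝ → Fin n → ℝ := xs - xp
  have he : ∀ t, HasDerivAt e (A *ᵥ e t) t := fun t => by
    simpa [e, mulVec_sub] using (hxs t).sub (hxp t)
  have hdecay : Real.exp (μ * t) * (e t ⬝ᵥ (M *ᵥ e t)) ≤ r := by
    have := antitone_exp_mul_dotProduct_mulVec_self hnsd he (hτ.trans ht.1)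
    simp only [mul_zero, Real.exp_zero, one_mul] at this
    exact this.trans hinit
  have hquad : e t ⬝ᵥ (M *ᵥ e t) ≤ r * Real.exp (-(μ * t)) := by
    rw [Real.exp_neg, ← div_eq_mul_inv, le_div_iff₀ (Real.exp_pos _)]
    linarith
  have hmargin : z * |a ⬝ᵥ e t| ≤ √r * Real.exp (-(μ * t) / 2) :=
    calc z * |a ⬝ᵥ e t| ≤ √(e t ⬝ᵥ (M *ᵥ e t)) := mul_abs_dotProduct_le_sqrt hz.le (hpsd _)
      _ ≤ √(r * Real.exp (-(μ * t))) := Real.sqrt_le_sqrt hquad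
      _ = √r * Real.exp (-(μ * t) / 2) := by
        rw [Real.sqrt_mul' _ (Real.exp_pos _).le, Real.exp_half]
  have hsplit : a ⬝ᵥ xp t = a ⬝ᵥ xs t - a ⬝ᵥ e t := by
    simp [e, dotProduct_sub]
  rw [hsplit]
  linarith [neg_abs_le (a ⬝ᵥ e t), (le_div_iff₀' hz).mpr hmargin, hnom t ht]

/-- Deterministic (noise-free) specialization of the paper's Theorem 1 for a single
'always' predicate: if the nominal trajectory satisfies the robustly modified predicate
on `[τ, T]`, then any trajectory starting in the ellipsoidal ball of radius `r` satisfies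
the original predicate on `[τ, T]`. -/
theorem stmt6 {n p : ℕ} (A : Matrix (Fin n) (Fin n) ℝ) (B : Matrix (Fin n) (Fin p) ℝ)
    (u : ℝ → Fin p → ℝ) (hu : Continuous u)
    (M : Matrix (Fin n) (Fin n) ℝ) (hM : M.IsSymm) (μ : ℝ)
    (hnsd : ∀ v : Fin n → ℝ, v ⬝ᵥ ((Aᵀ * M + M * A + μ • M) *ᵥ v) ≤ 0)
    (a : Fin n → ℝ) (c : Fin p → ℝ) (b : ℝ) (z : ℝ) (hz : 0 < z) (r : ℝ) (hr : 0 ≤ r)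
    (τ T : ℝ) (hτ : 0 ≤ τ) (hτT : τ ≤ T)
    (hpsd : ∀ w : Fin n → ℝ, 0 ≤ w ⬝ᵥ ((M - z ^ 2 • vecMulVec a a) *ᵥ w))
    (xs xp : ℝ → Fin n → ℝ)
    (hxs : ∀ t : ℝ, HasDerivAt xs (A *ᵥ xs t + B *ᵥ u t) t)
    (hxp : ∀ t : ℝ, HasDerivAt xp (A *ᵥ xp t + B *ᵥ u t) t)
    (hinit : xp 0 ∈ {v : Fin n → ℝ | (xs 0 - v) ⬝ᵥ (M *ᵥ (xs 0 - v)) ≤ r})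
    (hnom : ∀ t ∈ Set.Icc τ T,
      a ⬝ᵥ xs t + c ⬝ᵥ u t < b - Real.sqrt r * Real.exp (-(μ * t) / 2) / z) :
    ∀ t ∈ Set.Icc τ T, a ⬝ᵥ xp t + c ⬝ᵥ u t < b :=
  stmt6_general A B u M μ hnsd a c b z hz r τ T hτ hpsd xs xp hxs hxp hinit hnom
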